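/- arXiv:2511.03946 — 2 statements merged into one kernel-verified Lean document; each statement's English description precedes it below -/
import Mathlib

section
/- Let C be a monoidal category, A a C-actegory, M a monoid in C, and Σ : A → A a functor equipped with a tensorial strength with respect to the Pt(C)-action on A (where Pt(C) is the pointed monoidal category acting via underlying objects). Regard M as a pointed object via its unit. Then Σ lifts to an endofunctor on the category of M-actions in A: for an M-action (a, act : a ⊳ M → a), the object Σ(a) carries the M-action defined by Σ(a) ⊳ M → Σ(a ⊳ M) → Σ(a), where the first map is the strength at (a, M with point η_M) and the second is Σ(act); this structure satisfies the two M-action axioms (associativity and unit), and Σ sends M-action morphisms to M-action morphisms. -/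
open CategoryTheory MonoidalCategory Limits

universe v u v₁ u₁ v₂ u₂ v₃ u₃

/-- An actegory: a category `A` with an action of a monoidal category `C`, with
associator and unitor isomorphisms satisfying the pentagon and triangle axioms. -/
structure Actegory (C : Type u) [Category.{v} C] [MonoidalCategory C]
    (A : Type u₁) [Category.{v₁} A] where
  act : A → C → A
  map₁ : ∀ {a b : A}, (a ⟶ b) → ∀ (x : C), act a x ⟶ act b x
  map₂ : ∀ (a : A) {x y : C}, (x ⟶ y) → (act a x ⟶ act a y)
  map₁_id : ∀ (a : A) (x : C), map₁ (𝟙 a) x = 𝟙 (act a x)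
  map₂_id : ∀ (a : A) (x : C), map₂ a (𝟙 x) = 𝟙 (act a x)
  map₁_comp : ∀ {a b c : A} (f : a ⟶ b) (g : b ⟶ c) (x : C),
    map₁ (f ≫ g) x = map₁ f x ≫ map₁ g x
  map₂_comp : ∀ (a : A) {x y z : C} (f : x ⟶ y) (g : y ⟶ z),
    map₂ a (f ≫ g) = map₂ a f ≫ map₂ a g
  exchange : ∀ {a b : A} {x y : C} (f : a ⟶ b) (g : x ⟶ y),
    map₁ f x ≫ map₂ b g = map₂ a g ≫ map₁ f y
  assoc : ∀ (a : A) (x y : C), act (act a x) y ≅ act a (x ⊗ y)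
  runit : ∀ (a : A), act a (𝟙_ C) ≅ a
  assoc_nat₁ : ∀ {a b : A} (f : a ⟶ b) (x y : C),
    map₁ (map₁ f x) y ≫ (assoc b x y).hom = (assoc a x y).hom ≫ map₁ f (x ⊗ y)
  assoc_nat₂ : ∀ (a : A) {x x' : C} (f : x ⟶ x') (y : C),
    map₁ (map₂ a f) y ≫ (assoc a x' y).hom = (assoc a x y).hom ≫ map₂ a (f ▷ y)
  assoc_nat₃ : ∀ (a : A) (x : C) {y y' : C} (g : y ⟶ y'),
    map₂ (act a x) g ≫ (assoc a x y').hom = (assoc a x y).hom ≫ map₂ a (x ◁ g)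
  runit_nat : ∀ {a b : A} (f : a ⟶ b),
    map₁ f (𝟙_ C) ≫ (runit b).hom = (runit a).hom ≫ f
  pentagon : ∀ (a : A) (x y z : C),
    (assoc (act a x) y z).hom ≫ (assoc a x (y ⊗ z)).hom =
      map₁ (assoc a x y).hom z ≫ (assoc a (x ⊗ y) z).hom ≫ map₂ a (α_ x y z).hom
  triangle : ∀ (a : A) (y : C),
    (assoc a (𝟙_ C) y).hom ≫ map₂ a (λ_ y).hom = map₁ (runit a).hom y

variable {C : Type u} [Category.{v} C] [MonoidalCategory C]
  {A : Type u₁} [Category.{v₁} A] {B : Type u₂} [Category.{v₂} B]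

/-- A tensorial strength for a functor `F` between `C`-actegories. -/
structure Strength (JA : Actegory C A) (JB : Actegory C B) (F : A ⥤ B) where
  σ : ∀ (a : A) (x : C), JB.act (F.obj a) x ⟶ F.obj (JA.act a x)
  nat₁ : ∀ {a a' : A} (f : a ⟶ a') (x : C),
    JB.map₁ (F.map f) x ≫ σ a' x = σ a x ≫ F.map (JA.map₁ f x)
  nat₂ : ∀ (a : A) {x x' : C} (g : x ⟶ x'),
    JB.map₂ (F.obj a) g ≫ σ a x' = σ a x ≫ F.map (JA.map₂ a g)
  pentagon : ∀ (a : A) (x y : C),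
    JB.map₁ (σ a x) y ≫ σ (JA.act a x) y ≫ F.map (JA.assoc a x y).hom =
      (JB.assoc (F.obj a) x y).hom ≫ σ a (x ⊗ y)
  triangle : ∀ (a : A),
    σ a (𝟙_ C) ≫ F.map (JA.runit a).hom = (JB.runit (F.obj a)).hom


/-- The pointed tensor on the coslice category `Pt(C) = I/C`. -/
def pointedTensor (x y : Under (𝟙_ C)) : Under (𝟙_ C) :=
  Under.mk ((ρ_ (𝟙_ C)).inv ≫ (x.hom ⊗ₘ y.hom))

/-- A tensorial strength for `F` with respect to the actions of the pointed monoidal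
category `Pt(C)` on `A` and `B`, where a pointed object acts via its underlying object:
naturality (also in point-preserving morphisms), and the strength pentagon and triangle
axioms with respect to the pointed tensor and the pointed unit `(I, id)`. -/
structure PointedStrength (JA : Actegory C A) (JB : Actegory C B) (F : A ⥤ B) where
  σ : ∀ (a : A) (x : Under (𝟙_ C)), JB.act (F.obj a) x.right ⟶ F.obj (JA.act a x.right)
  nat₁ : ∀ {a a' : A} (f : a ⟶ a') (x : Under (𝟙_ C)),
    JB.map₁ (F.map f) x.right ≫ σ a' x = σ a x ≫ F.map (JA.map₁ f x.right)
  nat₂ : ∀ (a : A) {x x' : Under (𝟙_ C)} (g : x ⟶ x'),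
    JB.map₂ (F.obj a) g.right ≫ σ a x' = σ a x ≫ F.map (JA.map₂ a g.right)
  pentagon : ∀ (a : A) (x y : Under (𝟙_ C)),
    JB.map₁ (σ a x) y.right ≫ σ (JA.act a x.right) y ≫
        F.map (JA.assoc a x.right y.right).hom =
      (JB.assoc (F.obj a) x.right y.right).hom ≫ σ a (pointedTensor x y)
  triangle : ∀ (a : A),
    σ a (Under.mk (𝟙 (𝟙_ C))) ≫ F.map (JA.runit a).hom = (JB.runit (F.obj a)).hom


variable (J : Actegory C A) (M : Mon C) (S : A ⥤ A)

/-- An action of a monoid `M` (in `C`) on an object of a `C`-actegory. -/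
structure MAction where
  a : A
  act : J.act a M.X ⟶ a
  act_assoc : J.map₁ act M.X ≫ act = (J.assoc a M.X M.X).hom ≫ J.map₂ a M.mon.mul ≫ act
  act_unit : (J.runit a).inv ≫ J.map₂ a M.mon.one ≫ act = 𝟙 a

/-- The lifted `M`-action on `Σ(a)`: the strength at `(a, (M, η))` followed by `Σ(act)`. -/
def liftAct (ps : PointedStrength J J S) (N : MAction J M) :
    J.act (S.obj N.a) M.X ⟶ S.obj N.a :=
  ps.σ N.a (Under.mk M.mon.one) ≫ S.map N.act

/-!
Multiplication `(M, η) ⊗ (M, η) ⟶ (M, η)` and the unit `(I, 𝟙) ⟶ (M, η)` preserve points, so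
the pointed strength is natural in them. Associativity of the lifted action then follows from
associativity of `act`, the strength pentagon and naturality of `σ` in `μ`; unitality from
unitality of `act`, the strength triangle and naturality of `σ` in `η`.
-/

namespace CategoryTheory.Mon

def mulUnder (M : Mon C) :
    pointedTensor (Under.mk M.mon.one) (Under.mk M.mon.one) ⟶ Under.mk M.mon.one :=
  Under.homMk M.mon.mul (by simp [pointedTensor, MonoidalCategory.tensorHom_def])

def oneUnder (M : Mon C) : Under.mk (𝟙 (𝟙_ C)) ⟶ Under.mk M.mon.one :=
  Under.homMk M.mon.one (by simp)

end CategoryTheory.Mon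

namespace PointedStrength

variable {JA : Actegory C A} {JB : Actegory C B} {F : A ⥤ B} (ps : PointedStrength JA JB F)

lemma nat₁_mk {a a' : A} (f : a ⟶ a') {x : C} (p : 𝟙_ C ⟶ x) :
    JB.map₁ (F.map f) x ≫ ps.σ a' (Under.mk p) = ps.σ a (Under.mk p) ≫ F.map (JA.map₁ f x) :=
  ps.nat₁ f (Under.mk p)

lemma pentagon_mk (a : A) {x y : C} (p : 𝟙_ C ⟶ x) (q : 𝟙_ C ⟶ y) :
    JB.map₁ (ps.σ a (Under.mk p)) y ≫ ps.σ (JA.act a x) (Under.mk q) ≫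
        F.map (JA.assoc a x y).hom =
      (JB.assoc (F.obj a) x y).hom ≫ ps.σ a (pointedTensor (Under.mk p) (Under.mk q)) :=
  ps.pentagon a (Under.mk p) (Under.mk q)

lemma map₂_mul_σ (a : A) :
    JB.map₂ (F.obj a) M.mon.mul ≫ ps.σ a (Under.mk M.mon.one) =
      ps.σ a (pointedTensor (Under.mk M.mon.one) (Under.mk M.mon.one)) ≫
        F.map (JA.map₂ a M.mon.mul) :=
  ps.nat₂ a M.mulUnder

lemma map₂_one_σ (a : A) :
    JB.map₂ (F.obj a) M.mon.one ≫ ps.σ a (Under.mk M.mon.one) =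
      ps.σ a (Under.mk (𝟙 (𝟙_ C))) ≫ F.map (JA.map₂ a M.mon.one) :=
  ps.nat₂ a M.oneUnder

end PointedStrength

variable {J M S}

lemma MAction.map₂_one_act (N : MAction J M) :
    J.map₂ N.a M.mon.one ≫ N.act = (J.runit N.a).hom := by
  simpa using (Iso.inv_comp_eq _).1 N.act_unit

section

variable (ps : PointedStrength J J S)

lemma liftAct_assoc (N : MAction J M) :
    J.map₁ (liftAct J M S ps N) M.X ≫ liftAct J M S ps N =
      (J.assoc (S.obj N.a) M.X M.X).hom ≫ J.map₂ (S.obj N.a) M.mon.mul ≫ liftAct J M S ps N :=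
  calc J.map₁ (liftAct J M S ps N) M.X ≫ liftAct J M S ps N
      = J.map₁ (ps.σ N.a (Under.mk M.mon.one)) M.X ≫ ps.σ (J.act N.a M.X) (Under.mk M.mon.one) ≫
          S.map (J.map₁ N.act M.X ≫ N.act) := by
        rw [liftAct, J.map₁_comp, Category.assoc, reassoc_of% ps.nat₁_mk, S.map_comp]
        rfl
    _ = J.map₁ (ps.σ N.a (Under.mk M.mon.one)) M.X ≫ ps.σ (J.act N.a M.X) (Under.mk M.mon.one) ≫
          S.map (J.assoc N.a M.X M.X).hom ≫ S.map (J.map₂ N.a M.mon.mul ≫ N.act) := by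
        rw [N.act_assoc, S.map_comp]
    _ = (J.assoc (S.obj N.a) M.X M.X).hom ≫
          ps.σ N.a (pointedTensor (Under.mk M.mon.one) (Under.mk M.mon.one)) ≫
          S.map (J.map₂ N.a M.mon.mul ≫ N.act) := by
        rw [reassoc_of% ps.pentagon_mk]
        exact Category.assoc _ _ _
    _ = (J.assoc (S.obj N.a) M.X M.X).hom ≫ J.map₂ (S.obj N.a) M.mon.mul ≫
          liftAct J M S ps N := by
        rw [liftAct, reassoc_of% ps.map₂_mul_σ, S.map_comp]
        exact congrArg _ (Category.assoc _ _ _).symm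

lemma liftAct_unit (N : MAction J M) :
    (J.runit (S.obj N.a)).inv ≫ J.map₂ (S.obj N.a) M.mon.one ≫ liftAct J M S ps N =
      𝟙 (S.obj N.a) := by
  rw [liftAct, reassoc_of% ps.map₂_one_σ, ← S.map_comp, N.map₂_one_act, ps.triangle,
    Iso.inv_hom_id]

lemma map_map₁_liftAct {N N' : MAction J M} (f : N.a ⟶ N'.a)
    (hf : J.map₁ f M.X ≫ N'.act = N.act ≫ f) :
    J.map₁ (S.map f) M.X ≫ liftAct J M S ps N' = liftAct J M S ps N ≫ S.map f := by
  rw [liftAct, reassoc_of% ps.nat₁_mk, ← S.map_comp, hf, S.map_comp, liftAct, Category.assoc]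

end

/-- A pointed-strong endofunctor `Σ` lifts to the category of `M`-actions:
the lifted structure map satisfies the two `M`-action axioms, and `Σ` sends `M`-action
morphisms to `M`-action morphisms. -/
theorem pointed_strong_lifts_to_actions (ps : PointedStrength J J S) :
    (∀ N : MAction J M,
      (J.map₁ (liftAct J M S ps N) M.X ≫ liftAct J M S ps N =
        (J.assoc (S.obj N.a) M.X M.X).hom ≫ J.map₂ (S.obj N.a) M.mon.mul ≫ liftAct J M S ps N) ∧
      ((J.runit (S.obj N.a)).inv ≫ J.map₂ (S.obj N.a) M.mon.one ≫ liftAct J M S ps N =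
        𝟙 (S.obj N.a))) ∧
    (∀ (N N' : MAction J M) (f : N.a ⟶ N'.a),
      J.map₁ f M.X ≫ N'.act = N.act ≫ f →
      J.map₁ (S.map f) M.X ≫ liftAct J M S ps N' = liftAct J M S ps N ≫ S.map f) :=
  ⟨fun N => ⟨liftAct_assoc ps N, liftAct_unit ps N⟩,
    fun _ _ f hf => map_map₁_liftAct ps f hf⟩
end

section
/- Let C be a monoidal category acting on a category A (a C-actegory) such that A has an initial object 0 which is preserved by the action (i.e. the canonical map 0 → 0 ⊳ b is invertible for every b in C). Then the product category C × A carries a left-skew monoidal structure with tensor (a, x) ⊗' (b, y) := (a ⊗ b, x ⊳ b), unit J := (I, 0), associator (α_C, α_A), right unitor (ρ⁻¹, ρ⁻¹) : p → p ⊗' J, and left unitor (λ, !) : J ⊗' p → p where ! is the unique map out of the initial object; all five skew-monoidal axioms hold. Moreover this skew monoidal category is associative (the associator is invertible) and right-unital (the right unitor is invertible). -/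
open CategoryTheory MonoidalCategory Limits

universe v u v₁ u₁ v₂ u₂ v₃ u₃

variable {C : Type u} [Category.{v} C] [MonoidalCategory C]
  {A : Type u₁} [Category.{v₁} A] {B : Type u₂} [Category.{v₂} B]

/-- The data of a (left-)skew monoidal structure. -/
structure SkewMonoidalStruct (S : Type u₂) [Category.{v₂} S] where
  tensor : S → S → S
  tmap : ∀ {a b c d : S}, (a ⟶ b) → (c ⟶ d) → (tensor a c ⟶ tensor b d)
  unit : S
  assoc : ∀ a b c : S, tensor (tensor a b) c ⟶ tensor a (tensor b c)
  lunit : ∀ a : S, tensor unit a ⟶ a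
  runit : ∀ a : S, a ⟶ tensor a unit

/-- The axioms of a left-skew monoidal category: functoriality and naturality of the data,
and the five skew-monoidal axioms (pentagon, rectangle, left, right, triangle). -/
def IsSkewMonoidal {S : Type u₂} [Category.{v₂} S] (K : SkewMonoidalStruct S) : Prop :=
  (∀ a c : S, K.tmap (𝟙 a) (𝟙 c) = 𝟙 (K.tensor a c)) ∧
  (∀ {a b c d e f : S} (g : a ⟶ b) (g' : b ⟶ c) (h : d ⟶ e) (h' : e ⟶ f),
    K.tmap (g ≫ g') (h ≫ h') = K.tmap g h ≫ K.tmap g' h') ∧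
  -- naturality of the associator and the unitors
  (∀ {a a' b b' c c' : S} (f : a ⟶ a') (g : b ⟶ b') (h : c ⟶ c'),
    K.tmap (K.tmap f g) h ≫ K.assoc a' b' c' = K.assoc a b c ≫ K.tmap f (K.tmap g h)) ∧
  (∀ {a a' : S} (f : a ⟶ a'), K.tmap (𝟙 K.unit) f ≫ K.lunit a' = K.lunit a ≫ f) ∧
  (∀ {a a' : S} (f : a ⟶ a'), K.runit a ≫ K.tmap f (𝟙 K.unit) = f ≫ K.runit a') ∧
  -- pentagon
  (∀ a b c d : S,
    K.tmap (K.assoc a b c) (𝟙 d) ≫ K.assoc a (K.tensor b c) d ≫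
        K.tmap (𝟙 a) (K.assoc b c d) =
      K.assoc (K.tensor a b) c d ≫ K.assoc a b (K.tensor c d)) ∧
  -- rectangle : λ ∘ α = λ ⊗ id
  (∀ a b : S, K.assoc K.unit a b ≫ K.lunit (K.tensor a b) = K.tmap (K.lunit a) (𝟙 b)) ∧
  -- right : ρ' and α
  (∀ a b : S, K.runit (K.tensor a b) ≫ K.assoc a b K.unit = K.tmap (𝟙 a) (K.runit b)) ∧
  -- left : λ, α and ρ'
  (∀ a b : S,
    K.tmap (K.runit a) (𝟙 b) ≫ K.assoc a K.unit b ≫ K.tmap (𝟙 a) (K.lunit b) =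
      𝟙 (K.tensor a b)) ∧
  -- triangle
  (K.runit K.unit ≫ K.lunit K.unit = 𝟙 K.unit)

open Limits in
/-- The skew monoidal data on `C × A` induced by a `C`-actegory `A` with an initial object
`0` preserved by the action: tensor `(a,x) ⊗' (b,y) = (a ⊗ b, x ⊳ b)`, unit `(I, 0)`,
associator `(α_C, α_A)`, right unitor `(ρ⁻¹, ρ⁻¹)` and left unitor `(λ, !)`. -/
noncomputable def skewProdData (J : Actegory C A) (o : A) (hI : IsInitial o)
    (hpres : ∀ b : C, IsIso (hI.to (J.act o b))) : SkewMonoidalStruct (C × A) where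
  tensor p q := (p.1 ⊗ q.1, J.act p.2 q.1)
  tmap {p p' q q'} f g := (f.1 ⊗ₘ g.1, J.map₁ f.2 q.1 ≫ J.map₂ p'.2 g.1)
  unit := (𝟙_ C, o)
  assoc p q r := ((α_ p.1 q.1 r.1).hom, (J.assoc p.2 q.1 r.1).hom)
  lunit p := ((λ_ p.1).hom,
    (@CategoryTheory.inv A _ _ _ (hI.to (J.act o p.1)) (hpres p.1)) ≫ hI.to p.2)
  runit p := ((ρ_ p.1).inv, (J.runit p.2).inv)

/-! Every skew-monoidal axiom on `C × A` splits into a `C`-component, which holds because `C` is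
monoidal, and an `A`-component, which is a coherence law of the actegory. The `A`-components
involving the left unitor `(λ, !)` (its naturality, the rectangle and the triangle axioms) compare
parallel maps out of `0 ⊳ a`, `(0 ⊳ a) ⊳ b ≅ 0 ⊳ (a ⊗ b)` or `0`, which are all initial because the
action preserves `0`. The right axiom needs the derived law `α_{a,x,I} ≫ a ⊳ ρ_x = ρ_{a ⊳ x}`,
which follows by Kelly's argument: the pentagon at `(a, x, I, z)` and the triangle for `a ⊳ x`
prove it after applying `- ⊳ z`, and `- ⊳ I` is faithful since it is isomorphic to the identity. -/

namespace Actegory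

variable (J : Actegory C A)

theorem map₁_comp_map₂_comp {a b c : A} {x y z : C} (f : a ⟶ b) (f' : b ⟶ c) (g : x ⟶ y)
    (g' : y ⟶ z) :
    J.map₁ (f ≫ f') x ≫ J.map₂ c (g ≫ g') =
      J.map₁ f x ≫ J.map₂ b g ≫ J.map₁ f' y ≫ J.map₂ c g' := by
  rw [J.map₁_comp, J.map₂_comp, Category.assoc, reassoc_of% J.exchange f' g]

theorem assoc_naturality {a a' : A} {x x' y y' : C} (f : a ⟶ a') (g : x ⟶ x') (h : y ⟶ y') :
    J.map₁ (J.map₁ f x ≫ J.map₂ a' g) y ≫ J.map₂ (J.act a' x') h ≫ (J.assoc a' x' y').hom =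
      (J.assoc a x y).hom ≫ J.map₁ f (x ⊗ y) ≫ J.map₂ a' (g ⊗ₘ h) := by
  rw [J.assoc_nat₃, J.map₁_comp, Category.assoc, reassoc_of% J.assoc_nat₂,
    reassoc_of% J.assoc_nat₁, ← J.map₂_comp, ← MonoidalCategory.tensorHom_def]

theorem runit_inv_naturality {a b : A} (f : a ⟶ b) :
    (J.runit a).inv ≫ J.map₁ f (𝟙_ C) = f ≫ (J.runit b).inv := by
  rw [Iso.inv_comp_eq, ← reassoc_of% J.runit_nat, Iso.hom_inv_id, Category.comp_id]

theorem map₁_unit_injective {a b : A} {f g : a ⟶ b} (h : J.map₁ f (𝟙_ C) = J.map₁ g (𝟙_ C)) :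
    f = g := by
  rw [← cancel_epi (J.runit a).hom, ← J.runit_nat, ← J.runit_nat, h]

theorem map₁_assoc_hom_comp_map₂_rightUnitor (a : A) (x z : C) :
    J.map₁ ((J.assoc a x (𝟙_ C)).hom ≫ J.map₂ a (ρ_ x).hom) z =
      J.map₁ (J.runit (J.act a x)).hom z := by
  rw [← cancel_mono (J.assoc a x z).hom]
  calc J.map₁ ((J.assoc a x (𝟙_ C)).hom ≫ J.map₂ a (ρ_ x).hom) z ≫ (J.assoc a x z).hom
      = J.map₁ (J.assoc a x (𝟙_ C)).hom z ≫ (J.assoc a (x ⊗ 𝟙_ C) z).hom ≫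
          J.map₂ a ((ρ_ x).hom ▷ z) := by
        rw [J.map₁_comp, Category.assoc, J.assoc_nat₂]
    _ = (J.map₁ (J.assoc a x (𝟙_ C)).hom z ≫ (J.assoc a (x ⊗ 𝟙_ C) z).hom ≫
          J.map₂ a (α_ x (𝟙_ C) z).hom) ≫ J.map₂ a (x ◁ (λ_ z).hom) := by
        rw [← MonoidalCategory.triangle, J.map₂_comp]
        simp only [Category.assoc]
    _ = (J.assoc (J.act a x) (𝟙_ C) z).hom ≫ J.map₂ (J.act a x) (λ_ z).hom ≫
          (J.assoc a x z).hom := by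
        rw [← J.pentagon, Category.assoc, ← J.assoc_nat₃]
    _ = J.map₁ (J.runit (J.act a x)).hom z ≫ (J.assoc a x z).hom := by
        rw [reassoc_of% J.triangle]

theorem assoc_hom_comp_map₂_rightUnitor (a : A) (x : C) :
    (J.assoc a x (𝟙_ C)).hom ≫ J.map₂ a (ρ_ x).hom = (J.runit (J.act a x)).hom :=
  J.map₁_unit_injective (J.map₁_assoc_hom_comp_map₂_rightUnitor a x (𝟙_ C))

theorem runit_inv_comp_assoc_hom (a : A) (x : C) :
    (J.runit (J.act a x)).inv ≫ (J.assoc a x (𝟙_ C)).hom = J.map₂ a (ρ_ x).inv := by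
  rw [Iso.inv_comp_eq, ← J.assoc_hom_comp_map₂_rightUnitor, Category.assoc, ← J.map₂_comp,
    Iso.hom_inv_id, J.map₂_id, Category.comp_id]

end Actegory

section SkewProd

variable (J : Actegory C A) (o : A) (hI : IsInitial o)
  (hpres : ∀ b : C, IsIso (hI.to (J.act o b)))

attribute [local simp] Actegory.map₁_id Actegory.map₂_id

theorem isSkewMonoidal_skewProdData : IsSkewMonoidal (skewProdData J o hI hpres) := by
  refine ⟨fun a c => ?_, fun g g' h h' => ?_, fun f g h => ?_, fun f => ?_, fun f => ?_,
    fun a b c d => ?_, fun a b => ?_, fun a b => ?_, fun a b => ?_, ?_⟩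
  · ext <;> simp [skewProdData]
  · ext <;> simp [skewProdData, J.map₁_comp_map₂_comp]
  · ext <;> simp [skewProdData, J.assoc_naturality]
  · ext <;> simp [skewProdData]
  · ext <;> simp [skewProdData, J.runit_inv_naturality]
  · ext <;> simp [skewProdData, J.pentagon]
  · have := hpres (a.1 ⊗ b.1)
    have hinit : IsInitial (J.act (J.act o a.1) b.1) :=
      (hI.ofIso (asIso (hI.to _))).ofIso (J.assoc o a.1 b.1).symm
    ext
    · simp [skewProdData]
    · exact hinit.hom_ext _ _
  · ext <;> simp [skewProdData, J.runit_inv_comp_assoc_hom]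
  · ext <;> simp [skewProdData, J.triangle, ← J.map₁_comp]
  · ext
    · simp [skewProdData, unitors_equal]
    · exact hI.hom_ext _ _

theorem isIso_skewProdData_assoc (p q r : C × A) :
    IsIso ((skewProdData J o hI hpres).assoc p q r) := by
  dsimp [skewProdData]
  exact (isIso_prod_iff _ _).mpr ⟨inferInstance, inferInstance⟩

theorem isIso_skewProdData_runit (p : C × A) : IsIso ((skewProdData J o hI hpres).runit p) := by
  dsimp [skewProdData]
  exact (isIso_prod_iff _ _).mpr ⟨inferInstance, inferInstance⟩

end SkewProd

open Limits in
/-- The product `C × A` with the tensor `(a,x) ⊗' (b,y) = (a ⊗ b, x ⊳ b)`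
and unit `(I, 0)` is a left-skew monoidal category, which is moreover associative (the
associator is invertible) and right-unital (the right unitor is invertible). -/
theorem skew_monoidal_of_actegory (J : Actegory C A) (o : A) (hI : IsInitial o)
    (hpres : ∀ b : C, IsIso (hI.to (J.act o b))) :
    IsSkewMonoidal (skewProdData J o hI hpres) ∧
    (∀ a b c : C × A, IsIso ((skewProdData J o hI hpres).assoc a b c)) ∧
    (∀ a : C × A, IsIso ((skewProdData J o hI hpres).runit a)) :=
  ⟨isSkewMonoidal_skewProdData J o hI hpres, isIso_skewProdData_assoc J o hI hpres,
    isIso_skewProdData_runit J o hI hpres⟩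
end
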